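/- arXiv:1909.06477 — 4 statements merged into one kernel-verified Lean document; each statement's English description precedes it below -/
import Mathlib

section
/- Let ξ₁,…,ξₙ be i.i.d. real random variables taking values in [0,1], with true variance σ² = Var(ξ₁) and (biased) sample variance σ̂² = (1/n)∑ᵢ(ξᵢ − ξ̄)² where ξ̄ = (1/n)∑ᵢξᵢ. Then there exists a universal constant C > 0 such that for every t > 0, P(|σ̂² − σ²| > t) ≤ 2·exp(−C·n·t²/(σ² + t)). -/
open MeasureTheory ProbabilityTheory Real Finset

variable {Ω : Type} [MeasurableSpace Ω] {μ : Measure Ω}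

lemma integrable_bdd [IsFiniteMeasure μ] {f : Ω → ℝ} (hm : Measurable f) {C : ℝ}
    (hb : ∀ ω, |f ω| ≤ C) : Integrable f μ :=
  ⟨hm.aestronglyMeasurable, HasFiniteIntegral.of_bounded (ae_of_all _ hb)⟩

lemma memLp2_bdd [IsFiniteMeasure μ] {f : Ω → ℝ} (hm : Measurable f) {C : ℝ}
    (hb : ∀ ω, |f ω| ≤ C) : MemLp f 2 μ :=
  (memLp_top_of_bound hm.aestronglyMeasurable C (ae_of_all _ hb)).mono_exponent le_top

lemma exp_le_one_add_add_sq {x : ℝ} (h : |x| ≤ 1) : exp x ≤ 1 + x + x ^ 2 := by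
  have := Real.exp_bound h (by norm_num : (0:ℕ) < 2)
  simp only [Finset.sum_range_succ, Finset.sum_range_zero] at this
  norm_num at this
  nlinarith [abs_le.mp this, sq_nonneg x]

lemma mgf_le_of_bdd [IsProbabilityMeasure μ] {Z : Ω → ℝ} (hm : Measurable Z)
    (hb : ∀ ω, |Z ω| ≤ 1) (hcent : ∫ ω, Z ω ∂μ = 0) {v c : ℝ}
    (hv : ∫ ω, (Z ω) ^ 2 ∂μ ≤ v) (hc0 : 0 ≤ c) (hc1 : c ≤ 1) :
    mgf Z μ c ≤ exp (v * c ^ 2) := by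
  have hZint : Integrable Z μ := integrable_bdd hm hb
  have hZ2int : Integrable (fun ω => (Z ω) ^ 2) μ := by
    refine integrable_bdd (hm.pow_const 2) (C := 1) fun ω => ?_
    rw [abs_pow]
    calc |Z ω| ^ 2 ≤ 1 ^ 2 := pow_le_pow_left₀ (abs_nonneg _) (hb ω) 2
    _ = 1 := one_pow 2
  have hpt : ∀ ω, exp (c * Z ω) ≤ 1 + c * Z ω + c ^ 2 * (Z ω) ^ 2 := by
    intro ω
    have habs : |c * Z ω| ≤ 1 := by
      rw [abs_mul, abs_of_nonneg hc0]
      calc c * |Z ω| ≤ 1 * 1 := mul_le_mul hc1 (hb ω) (abs_nonneg _) zero_le_one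
      _ = 1 := one_mul 1
    have := exp_le_one_add_add_sq habs
    calc exp (c * Z ω) ≤ 1 + c * Z ω + (c * Z ω) ^ 2 := this
    _ = 1 + c * Z ω + c ^ 2 * (Z ω) ^ 2 := by ring
  have hint : ∫ ω, exp (c * Z ω) ∂μ ≤ ∫ ω, (1 + c * Z ω + c ^ 2 * (Z ω) ^ 2) ∂μ := by
    refine integral_mono ?_ ?_ hpt
    · refine integrable_bdd ((hm.const_mul c).exp) (C := exp 1) fun ω => ?_
      rw [abs_of_pos (exp_pos _)]
      apply exp_le_exp.2
      calc c * Z ω ≤ |c * Z ω| := le_abs_self _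
      _ ≤ 1 := by
        rw [abs_mul, abs_of_nonneg hc0]
        calc c * |Z ω| ≤ 1 * 1 := mul_le_mul hc1 (hb ω) (abs_nonneg _) zero_le_one
        _ = 1 := one_mul 1
    · exact (integrable_const 1).add ((hZint.const_mul c)) |>.add (hZ2int.const_mul (c ^ 2))
  have hval : ∫ ω, (1 + c * Z ω + c ^ 2 * (Z ω) ^ 2) ∂μ = 1 + c ^ 2 * ∫ ω, (Z ω) ^ 2 ∂μ := by
    rw [integral_add, integral_add, integral_const, integral_const_mul, integral_const_mul,
      hcent]
    · simp
    · exact integrable_const 1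
    · exact hZint.const_mul c
    · exact (integrable_const 1).add (hZint.const_mul c)
    · exact hZ2int.const_mul (c ^ 2)
  have hvc : 1 + c ^ 2 * ∫ ω, (Z ω) ^ 2 ∂μ ≤ 1 + v * c ^ 2 := by
    nlinarith [sq_nonneg c]
  calc mgf Z μ c = ∫ ω, exp (c * Z ω) ∂μ := rfl
  _ ≤ 1 + v * c ^ 2 := by rw [hval] at hint; linarith
  _ ≤ exp (v * c ^ 2) := by linarith [Real.add_one_le_exp (v * c ^ 2)]

lemma bernstein_sum [IsProbabilityMeasure μ] {n : ℕ} {Z : Fin n → Ω → ℝ}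
    (hm : ∀ i, Measurable (Z i)) (hb : ∀ i ω, |Z i ω| ≤ 1)
    (hcent : ∀ i, ∫ ω, Z i ω ∂μ = 0) {v : ℝ} (hv0 : 0 ≤ v)
    (hv : ∀ i, ∫ ω, (Z i ω) ^ 2 ∂μ ≤ v)
    (hind : iIndepFun Z μ) {s : ℝ} (hs : 0 < s) :
    μ {ω | (n : ℝ) * s ≤ ∑ i, Z i ω} ≤
      ENNReal.ofReal (exp (-((n : ℝ) * s ^ 2 / (4 * (v + s))))) := by
  set c : ℝ := s / (2 * (v + s)) with hc_def
  have hd : 0 < v + s := by linarith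
  have hc0 : 0 < c := div_pos hs (by linarith)
  have hc1 : c ≤ 1 := by
    rw [div_le_one (by linarith)]; linarith
  have hintexp : ∀ i, Integrable (fun ω => exp (c * Z i ω)) μ := by
    intro i
    refine integrable_bdd ((hm i).const_mul c).exp (C := exp 1) fun ω => ?_
    rw [abs_of_pos (exp_pos _)]
    apply exp_le_exp.2
    calc c * Z i ω ≤ |c * Z i ω| := le_abs_self _
    _ ≤ 1 := by
      rw [abs_mul, abs_of_pos hc0]
      calc c * |Z i ω| ≤ 1 * 1 := mul_le_mul hc1 (hb i ω) (abs_nonneg _) zero_le_one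
      _ = 1 := one_mul 1
  have hchern := measure_ge_le_exp_mul_mgf (μ := μ) (X := ∑ i, Z i) ((n : ℝ) * s) hc0.le
    (hind.integrable_exp_mul_sum hm (fun i _ => hintexp i))
  have hset : {ω | (n : ℝ) * s ≤ ∑ i, Z i ω} = {ω | (n : ℝ) * s ≤ (∑ i, Z i) ω} := by
    ext ω; simp [Finset.sum_apply]
  rw [hset]
  have hmgf : mgf (∑ i, Z i) μ c ≤ exp ((n : ℝ) * (v * c ^ 2)) := by
    rw [hind.mgf_sum hm]
    calc ∏ i : Fin n, mgf (Z i) μ c ≤ ∏ _i : Fin n, exp (v * c ^ 2) := by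
          refine Finset.prod_le_prod (fun i _ => mgf_nonneg) (fun i _ => ?_)
          exact mgf_le_of_bdd (hm i) (hb i) (hcent i) (hv i) hc0.le hc1
    _ = exp ((n : ℝ) * (v * c ^ 2)) := by
          rw [Finset.prod_const, ← Real.exp_nat_mul]
          simp
  have hexp : exp (-c * ((n : ℝ) * s)) * mgf (∑ i, Z i) μ c ≤
      exp (-((n : ℝ) * s ^ 2 / (4 * (v + s)))) := by
    calc exp (-c * ((n : ℝ) * s)) * mgf (∑ i, Z i) μ c
        ≤ exp (-c * ((n : ℝ) * s)) * exp ((n : ℝ) * (v * c ^ 2)) := by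
          exact mul_le_mul_of_nonneg_left hmgf (exp_pos _).le
    _ = exp ((n : ℝ) * (-(c * s) + v * c ^ 2)) := by rw [← exp_add]; ring_nf
    _ ≤ exp (-((n : ℝ) * s ^ 2 / (4 * (v + s)))) := by
          apply exp_le_exp.2
          have key : -(c * s) + v * c ^ 2 ≤ -(s ^ 2 / (4 * (v + s))) := by
            have h2 : c * s = 2 * (s ^ 2 / (4 * (v + s))) := by
              rw [hc_def]; field_simp; ring
            have h1 : v * c ^ 2 ≤ s ^ 2 / (4 * (v + s)) := by
              rw [hc_def, div_pow, mul_div_assoc']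
              rw [div_le_div_iff₀ (by positivity) (by positivity)]
              nlinarith [mul_nonneg (mul_nonneg (sq_nonneg s) hd.le) hs.le]
            linarith
          calc (n : ℝ) * (-(c * s) + v * c ^ 2)
              ≤ (n : ℝ) * (-(s ^ 2 / (4 * (v + s)))) := by
                exact mul_le_mul_of_nonneg_left key (Nat.cast_nonneg n)
          _ = -((n : ℝ) * s ^ 2 / (4 * (v + s))) := by ring
  calc μ {ω | (n : ℝ) * s ≤ (∑ i, Z i) ω}
      = ENNReal.ofReal (μ {ω | (n : ℝ) * s ≤ (∑ i, Z i) ω}).toReal := by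
        rw [ENNReal.ofReal_toReal (measure_ne_top μ _)]
  _ ≤ ENNReal.ofReal (exp (-((n : ℝ) * s ^ 2 / (4 * (v + s))))) :=
        ENNReal.ofReal_le_ofReal (le_trans hchern hexp)

lemma sample_var_decomp {n : ℕ} (hn : 0 < n) (a : Fin n → ℝ) (m V : ℝ) :
    (1 / (n : ℝ)) * ∑ i, (a i - (1 / (n : ℝ)) * ∑ j, a j) ^ 2 - V
      = (1 / (n : ℝ)) * (∑ i, ((a i - m) ^ 2 - V))
        - ((1 / (n : ℝ)) * ∑ i, (a i - m)) ^ 2 := by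
  have hn' : (n : ℝ) ≠ 0 := Nat.cast_ne_zero.2 hn.ne'
  have h1 : ∀ c : ℝ, ∑ i, (a i - c) ^ 2
      = (∑ i, (a i) ^ 2) - 2 * c * (∑ i, a i) + (n : ℝ) * c ^ 2 := by
    intro c
    have h : ∀ i : Fin n, (a i - c) ^ 2 = (a i) ^ 2 - (2 * c) * (a i) + c ^ 2 := fun i => by ring
    simp only [h, Finset.sum_add_distrib, Finset.sum_sub_distrib, ← Finset.mul_sum,
      Finset.sum_const, Finset.card_univ, Fintype.card_fin, nsmul_eq_mul]
    try ring
  have h2 : ∑ i, (a i - m) = (∑ i, a i) - (n : ℝ) * m := by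
    simp [Finset.sum_sub_distrib, Finset.sum_const, Finset.card_univ, mul_comm]
  have h3 : ∑ i, ((a i - m) ^ 2 - V) = (∑ i, (a i - m) ^ 2) - (n : ℝ) * V := by
    simp [Finset.sum_sub_distrib, Finset.sum_const, Finset.card_univ, mul_comm]
  rw [h1, h3, h1, h2]
  field_simp
  ring

set_option maxHeartbeats 2000000 in
/-- Concentration of the (biased) sample variance of i.i.d. `[0,1]`-valued random
variables around the true variance. -/
theorem sample_variance_concentration_bounded :
    ∃ C : ℝ, 0 < C ∧
      ∀ (Ω : Type) (_ : MeasurableSpace Ω) (μ : Measure Ω), IsProbabilityMeasure μ →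
      ∀ n : ℕ, ∀ hn : 0 < n,
      ∀ ξ : Fin n → Ω → ℝ,
        (∀ i, Measurable (ξ i)) →
        (∀ i ω, ξ i ω ∈ Set.Icc (0 : ℝ) 1) →
        iIndepFun ξ μ →
        (∀ i, μ.map (ξ i) = μ.map (ξ ⟨0, hn⟩)) →
        ∀ t : ℝ, 0 < t →
          μ {ω | t <
              |(1 / (n : ℝ)) * ∑ i, (ξ i ω - (1 / (n : ℝ)) * ∑ j, ξ j ω) ^ 2
                - variance (ξ ⟨0, hn⟩) μ|}
            ≤ ENNReal.ofReal
                (2 * Real.exp (-(C * n * t ^ 2 / (variance (ξ ⟨0, hn⟩) μ + t)))) := by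
  refine ⟨1/32, by norm_num, ?_⟩
  intro Ω mΩ μ hμ n hn ξ hξm hξb hind hmap t ht
  haveI : IsProbabilityMeasure μ := hμ
  set i0 : Fin n := ⟨0, hn⟩ with hi0
  set V : ℝ := variance (ξ i0) μ with hVdef
  set m : ℝ := ∫ ω, ξ i0 ω ∂μ with hmdef
  have hξ0 : ∀ i ω, 0 ≤ ξ i ω := fun i ω => (hξb i ω).1
  have hξ1 : ∀ i ω, ξ i ω ≤ 1 := fun i ω => (hξb i ω).2
  have hξabs : ∀ i ω, |ξ i ω| ≤ 1 := fun i ω => abs_le.2 ⟨by linarith [hξ0 i ω], hξ1 i ω⟩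
  have hξint : ∀ i, Integrable (ξ i) μ := fun i => integrable_bdd (hξm i) (hξabs i)
  -- identical laws transfer integrals
  have hlaw : ∀ g : ℝ → ℝ, Measurable g → ∀ i,
      ∫ ω, g (ξ i ω) ∂μ = ∫ ω, g (ξ i0 ω) ∂μ := by
    intro g hg i
    rw [← integral_map (hξm i).aemeasurable hg.aestronglyMeasurable, hmap i,
      integral_map (hξm i0).aemeasurable hg.aestronglyMeasurable]
  have hmean : ∀ i, ∫ ω, ξ i ω ∂μ = m := fun i => hlaw id measurable_id i
  have hm0 : 0 ≤ m := integral_nonneg fun ω => hξ0 i0 ω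
  have hm1 : m ≤ 1 := by
    rw [hmdef]
    calc ∫ ω, ξ i0 ω ∂μ ≤ ∫ _ω, (1:ℝ) ∂μ :=
          integral_mono (hξint i0) (integrable_const 1) (hξ1 i0)
    _ = 1 := by simp
  have hYbd : ∀ i ω, (ξ i ω - m) ^ 2 ≤ 1 := by
    intro i ω; nlinarith [hξ0 i ω, hξ1 i ω]
  have hYnn : ∀ i ω, 0 ≤ (ξ i ω - m) ^ 2 := fun i ω => sq_nonneg _
  have hYmeas : ∀ i, Measurable (fun ω => (ξ i ω - m) ^ 2) :=
    fun i => ((hξm i).sub measurable_const).pow_const 2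
  have hYint : ∀ i, Integrable (fun ω => (ξ i ω - m) ^ 2) μ := fun i =>
    integrable_bdd (hYmeas i) (fun ω => abs_le.2 ⟨by nlinarith [hYnn i ω], hYbd i ω⟩)
  -- variance identification
  have hVeq : V = ∫ ω, (ξ i0 ω - m) ^ 2 ∂μ := by
    have hL2 : MemLp (ξ i0) 2 μ := memLp2_bdd (hξm i0) (hξabs i0)
    have := variance_eq_integral (hξm i0).aemeasurable (μ := μ)
    simpa using this
  have hVmean : ∀ i, ∫ ω, (ξ i ω - m) ^ 2 ∂μ = V := by
    intro i
    rw [hlaw (fun x => (x - m) ^ 2) ((measurable_id.sub measurable_const).pow_const 2) i]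
    exact hVeq.symm
  have hV0 : 0 ≤ V := variance_nonneg _ _
  have hV1 : V ≤ 1 := by
    rw [hVeq]
    calc ∫ ω, (ξ i0 ω - m) ^ 2 ∂μ ≤ ∫ _ω, (1:ℝ) ∂μ :=
          integral_mono (hYint i0) (integrable_const 1) (hYbd i0)
    _ = 1 := by simp
  -- the four centered families
  set Z1 : Fin n → Ω → ℝ := fun i ω => (ξ i ω - m) ^ 2 - V with hZ1
  set Z2 : Fin n → Ω → ℝ := fun i ω => -((ξ i ω - m) ^ 2 - V) with hZ2
  set Z3 : Fin n → Ω → ℝ := fun i ω => ξ i ω - m with hZ3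
  set Z4 : Fin n → Ω → ℝ := fun i ω => -(ξ i ω - m) with hZ4
  have hZ1m : ∀ i, Measurable (Z1 i) := fun i => (hYmeas i).sub measurable_const
  have hZ2m : ∀ i, Measurable (Z2 i) := fun i => (hZ1m i).neg
  have hZ3m : ∀ i, Measurable (Z3 i) := fun i => (hξm i).sub measurable_const
  have hZ4m : ∀ i, Measurable (Z4 i) := fun i => (hZ3m i).neg
  have hZ1b : ∀ i ω, |Z1 i ω| ≤ 1 := fun i ω =>
    abs_le.2 ⟨by simp only [hZ1]; nlinarith [hYnn i ω], by simp only [hZ1]; nlinarith [hYbd i ω]⟩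
  have hZ2b : ∀ i ω, |Z2 i ω| ≤ 1 := fun i ω => by
    simp only [hZ2, abs_neg]; exact hZ1b i ω
  have hZ3b : ∀ i ω, |Z3 i ω| ≤ 1 := fun i ω =>
    abs_le.2 ⟨by simp only [hZ3]; linarith [hξ0 i ω], by simp only [hZ3]; linarith [hξ1 i ω]⟩
  have hZ4b : ∀ i ω, |Z4 i ω| ≤ 1 := fun i ω => by
    simp only [hZ4, abs_neg]; exact hZ3b i ω
  have hZ1c : ∀ i, ∫ ω, Z1 i ω ∂μ = 0 := by
    intro i
    simp only [hZ1]
    rw [integral_sub (hYint i) (integrable_const V), hVmean i]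
    simp
  have hZ2c : ∀ i, ∫ ω, Z2 i ω ∂μ = 0 := by
    intro i
    simp only [hZ2]
    rw [integral_neg]
    simp only [hZ1] at hZ1c
    rw [hZ1c i, neg_zero]
  have hZ3c : ∀ i, ∫ ω, Z3 i ω ∂μ = 0 := by
    intro i
    simp only [hZ3]
    rw [integral_sub (hξint i) (integrable_const m), hmean i]
    simp
  have hZ4c : ∀ i, ∫ ω, Z4 i ω ∂μ = 0 := by
    intro i
    simp only [hZ4]
    rw [integral_neg]
    simp only [hZ3] at hZ3c
    rw [hZ3c i, neg_zero]
  -- second moments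
  have hZ1v : ∀ i, ∫ ω, (Z1 i ω) ^ 2 ∂μ ≤ V := by
    intro i
    have hg : Measurable (fun x : ℝ => ((x - m) ^ 2 - V) ^ 2) :=
      (((measurable_id.sub measurable_const).pow_const 2).sub measurable_const).pow_const 2
    have htrans : ∫ ω, (Z1 i ω) ^ 2 ∂μ = ∫ ω, (Z1 i0 ω) ^ 2 ∂μ := by
      simp only [hZ1]
      exact hlaw (fun x => ((x - m) ^ 2 - V) ^ 2) hg i
    rw [htrans]
    -- expand (Y - V)^2
    have hY2int : Integrable (fun ω => ((ξ i0 ω - m) ^ 2) ^ 2) μ := by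
      refine integrable_bdd ((hYmeas i0).pow_const 2) (C := 1) fun ω => ?_
      rw [abs_of_nonneg (sq_nonneg _)]
      nlinarith [hYnn i0 ω, hYbd i0 ω]
    have hexpand : ∀ ω, (Z1 i0 ω) ^ 2
        = ((ξ i0 ω - m) ^ 2) ^ 2 - (2 * V) * ((ξ i0 ω - m) ^ 2) + V ^ 2 := by
      intro ω; simp only [hZ1]; ring
    rw [integral_congr_ae (ae_of_all _ hexpand)]
    have hfint : Integrable (fun ω => ((ξ i0 ω - m) ^ 2) ^ 2 - 2 * V * (ξ i0 ω - m) ^ 2) μ :=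
      hY2int.sub ((hYint i0).const_mul (2 * V))
    rw [integral_add hfint (integrable_const _),
      integral_sub hY2int ((hYint i0).const_mul (2 * V)), integral_const_mul, hVmean i0,
      integral_const]
    have hY2leY : ∫ ω, ((ξ i0 ω - m) ^ 2) ^ 2 ∂μ ≤ ∫ ω, (ξ i0 ω - m) ^ 2 ∂μ := by
      refine integral_mono hY2int (hYint i0) fun ω => ?_
      nlinarith [hYnn i0 ω, hYbd i0 ω]
    rw [hVmean i0] at hY2leY
    simp only [measure_univ, probReal_univ, ENNReal.toReal_one, smul_eq_mul, one_mul]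
    nlinarith [sq_nonneg V]
  have hZ2v : ∀ i, ∫ ω, (Z2 i ω) ^ 2 ∂μ ≤ V := by
    intro i
    have : ∀ ω, (Z2 i ω) ^ 2 = (Z1 i ω) ^ 2 := fun ω => by simp only [hZ1, hZ2]; ring
    rw [integral_congr_ae (ae_of_all _ this)]
    exact hZ1v i
  have hZ3v : ∀ i, ∫ ω, (Z3 i ω) ^ 2 ∂μ ≤ V := by
    intro i
    simp only [hZ3]
    rw [hVmean i]
  have hZ4v : ∀ i, ∫ ω, (Z4 i ω) ^ 2 ∂μ ≤ V := by
    intro i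
    have : ∀ ω, (Z4 i ω) ^ 2 = (Z3 i ω) ^ 2 := fun ω => by simp only [hZ3, hZ4]; ring
    rw [integral_congr_ae (ae_of_all _ this)]
    exact hZ3v i
  -- independence
  have hind1 : iIndepFun Z1 μ :=
    hind.comp (fun _ x => (x - m) ^ 2 - V)
      (fun _ => ((measurable_id.sub measurable_const).pow_const 2).sub measurable_const)
  have hind2 : iIndepFun Z2 μ :=
    hind.comp (fun _ x => -((x - m) ^ 2 - V))
      (fun _ => (((measurable_id.sub measurable_const).pow_const 2).sub measurable_const).neg)
  have hind3 : iIndepFun Z3 μ :=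
    hind.comp (fun _ x => x - m) (fun _ => measurable_id.sub measurable_const)
  have hind4 : iIndepFun Z4 μ :=
    hind.comp (fun _ x => -(x - m)) (fun _ => (measurable_id.sub measurable_const).neg)
  -- case t ≥ 1 : event is empty
  by_cases ht1 : 1 ≤ t
  · have hempty : μ {ω | t <
        |(1 / (n : ℝ)) * ∑ i, (ξ i ω - (1 / (n : ℝ)) * ∑ j, ξ j ω) ^ 2 - V|} = 0 := by
      rw [show {ω | t <
        |(1 / (n : ℝ)) * ∑ i, (ξ i ω - (1 / (n : ℝ)) * ∑ j, ξ j ω) ^ 2 - V|} = (∅ : Set Ω)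
        from ?_]
      · exact measure_empty
      ext ω
      simp only [Set.mem_setOf_eq, Set.mem_empty_iff_false, iff_false, not_lt]
      have hnpos : (0:ℝ) < n := Nat.cast_pos.2 hn
      have hbar0 : 0 ≤ (1 / (n : ℝ)) * ∑ j, ξ j ω := by
        apply mul_nonneg (by positivity)
        exact Finset.sum_nonneg fun j _ => hξ0 j ω
      have hbar1 : (1 / (n : ℝ)) * ∑ j, ξ j ω ≤ 1 := by
        have hS : ∑ j, ξ j ω ≤ (n : ℝ) := by
          calc ∑ j, ξ j ω ≤ ∑ _j : Fin n, (1:ℝ) := Finset.sum_le_sum fun j _ => hξ1 j ω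
          _ = n := by simp
        calc (1 / (n : ℝ)) * ∑ j, ξ j ω ≤ (1 / (n : ℝ)) * (n : ℝ) := by
              exact mul_le_mul_of_nonneg_left hS (by positivity)
        _ = 1 := by field_simp
      have hsv1 : (1 / (n : ℝ)) * ∑ i, (ξ i ω - (1 / (n : ℝ)) * ∑ j, ξ j ω) ^ 2 ≤ 1 := by
        have hS : ∑ i, (ξ i ω - (1 / (n : ℝ)) * ∑ j, ξ j ω) ^ 2 ≤ (n : ℝ) := by
          calc ∑ i, (ξ i ω - (1 / (n : ℝ)) * ∑ j, ξ j ω) ^ 2 ≤ ∑ _i : Fin n, (1:ℝ) :=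
                Finset.sum_le_sum fun i _ => by nlinarith [hξ0 i ω, hξ1 i ω]
          _ = n := by simp
        calc (1 / (n : ℝ)) * ∑ i, (ξ i ω - (1 / (n : ℝ)) * ∑ j, ξ j ω) ^ 2
            ≤ (1 / (n : ℝ)) * (n : ℝ) := by
              exact mul_le_mul_of_nonneg_left hS (by positivity)
        _ = 1 := by field_simp
      have hsv0 : 0 ≤ (1 / (n : ℝ)) * ∑ i, (ξ i ω - (1 / (n : ℝ)) * ∑ j, ξ j ω) ^ 2 := by
        apply mul_nonneg (by positivity)
        exact Finset.sum_nonneg fun i _ => sq_nonneg _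
      rw [abs_le]
      constructor <;> linarith
    rw [hempty]
    exact zero_le
  push_neg at ht1
  -- Bernstein bounds
  have hs3 : 0 < Real.sqrt (t / 2) := Real.sqrt_pos.2 (by linarith)
  have hs3sq : (Real.sqrt (t / 2)) ^ 2 = t / 2 := Real.sq_sqrt (by linarith)
  have hs31 : Real.sqrt (t / 2) ≤ 1 := by
    rw [show (1:ℝ) = Real.sqrt 1 from (Real.sqrt_one).symm]
    exact Real.sqrt_le_sqrt (by linarith)
  have b1 := bernstein_sum hZ1m hZ1b hZ1c hV0 hZ1v hind1 ht
  have b2 := bernstein_sum hZ2m hZ2b hZ2c hV0 hZ2v hind2 (s := t / 2) (by linarith)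
  have b3 := bernstein_sum hZ3m hZ3b hZ3c hV0 hZ3v hind3 hs3
  have b4 := bernstein_sum hZ4m hZ4b hZ4c hV0 hZ4v hind4 hs3
  -- inclusion
  have hnpos : (0:ℝ) < n := Nat.cast_pos.2 hn
  have hsub : {ω | t <
      |(1 / (n : ℝ)) * ∑ i, (ξ i ω - (1 / (n : ℝ)) * ∑ j, ξ j ω) ^ 2 - V|} ⊆
      {ω | (n : ℝ) * t ≤ ∑ i, Z1 i ω} ∪ ({ω | (n : ℝ) * (t / 2) ≤ ∑ i, Z2 i ω} ∪
        ({ω | (n : ℝ) * Real.sqrt (t / 2) ≤ ∑ i, Z3 i ω} ∪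
         {ω | (n : ℝ) * Real.sqrt (t / 2) ≤ ∑ i, Z4 i ω})) := by
    intro ω hω
    simp only [Set.mem_setOf_eq] at hω
    rw [sample_var_decomp hn (fun i => ξ i ω) m V] at hω
    set A : ℝ := (1 / (n : ℝ)) * (∑ i, ((ξ i ω - m) ^ 2 - V)) with hA
    set x : ℝ := (1 / (n : ℝ)) * ∑ i, (ξ i ω - m) with hx
    clear_value A x
    have hn' : (n : ℝ) ≠ 0 := ne_of_gt hnpos
    have hSZ1 : ∑ i, Z1 i ω = (n : ℝ) * A := by
      rw [hA]; simp only [hZ1]; field_simp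
    have hSZ3 : ∑ i, Z3 i ω = (n : ℝ) * x := by
      rw [hx]; simp only [hZ3]; field_simp
    have hSZ2 : ∑ i, Z2 i ω = -((n : ℝ) * A) := by
      have hptw : ∀ i : Fin n, Z2 i ω = -(Z1 i ω) := fun i => rfl
      rw [Finset.sum_congr rfl fun i _ => hptw i, Finset.sum_neg_distrib, hSZ1]
    have hSZ4 : ∑ i, Z4 i ω = -((n : ℝ) * x) := by
      have hptw : ∀ i : Fin n, Z4 i ω = -(Z3 i ω) := fun i => rfl
      rw [Finset.sum_congr rfl fun i _ => hptw i, Finset.sum_neg_distrib, hSZ3]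
    rcases lt_abs.mp hω with hc | hc
    · left
      simp only [Set.mem_setOf_eq, hSZ1]
      nlinarith [sq_nonneg x]
    · right
      by_cases hB : t / 2 < x ^ 2
      · right
        have habs : Real.sqrt (t / 2) < |x| := by
          by_contra hcon
          push_neg at hcon
          have : x ^ 2 ≤ (Real.sqrt (t / 2)) ^ 2 := by
            nlinarith [abs_nonneg x, sq_abs x]
          rw [hs3sq] at this
          linarith
        rcases lt_abs.mp habs with hx1 | hx1
        · left
          simp only [Set.mem_setOf_eq, hSZ3]
          nlinarith
        · right
          simp only [Set.mem_setOf_eq, hSZ4]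
          nlinarith
      · left
        push_neg at hB
        simp only [Set.mem_setOf_eq, hSZ2]
        nlinarith
  -- case on size of exponent
  by_cases hD : Real.log 2 ≤ ((n : ℝ) * t ^ 2 / (V + t)) / 32
  · -- union bound
    have hVt : (0:ℝ) < V + t := by linarith
    have hVt2 : (0:ℝ) < V + t / 2 := by linarith
    have hVs : (0:ℝ) < V + Real.sqrt (t / 2) := by linarith
    set e : ℝ := exp (-((n : ℝ) * t ^ 2 / (16 * (V + t)))) with he
    have he1 : exp (-((n : ℝ) * t ^ 2 / (4 * (V + t)))) ≤ e := by
      rw [he, exp_le_exp, neg_le_neg_iff]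
      gcongr
      linarith
    have he2 : exp (-((n : ℝ) * (t / 2) ^ 2 / (4 * (V + t / 2)))) ≤ e := by
      rw [he, exp_le_exp, neg_le_neg_iff]
      have heq : (n : ℝ) * (t / 2) ^ 2 / (4 * (V + t / 2))
          = (n : ℝ) * t ^ 2 / (16 * (V + t / 2)) := by
        field_simp
        ring
      rw [heq]
      gcongr
      linarith
    have he3 : exp (-((n : ℝ) * (Real.sqrt (t / 2)) ^ 2 / (4 * (V + Real.sqrt (t / 2))))) ≤ e := by
      rw [he, exp_le_exp, neg_le_neg_iff, hs3sq]
      rw [div_le_div_iff₀ (by positivity) (by positivity)]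
      have h1 : (n : ℝ) * t ^ 2 * 4 ≤ (n : ℝ) * (t * 4) * t := by nlinarith
      nlinarith [mul_nonneg (mul_nonneg (Nat.cast_nonneg n : (0:ℝ) ≤ n) ht.le) hV0,
        mul_nonneg (mul_nonneg (Nat.cast_nonneg n : (0:ℝ) ≤ n) ht.le) hs3.le,
        mul_nonneg (mul_nonneg (mul_nonneg (Nat.cast_nonneg n : (0:ℝ) ≤ n) ht.le) ht.le) hV0,
        mul_nonneg (mul_nonneg (mul_nonneg (Nat.cast_nonneg n : (0:ℝ) ≤ n) ht.le) ht.le) hs3.le]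
    have hsum : μ {ω | t <
        |(1 / (n : ℝ)) * ∑ i, (ξ i ω - (1 / (n : ℝ)) * ∑ j, ξ j ω) ^ 2 - V|}
        ≤ ENNReal.ofReal (4 * e) := by
      calc μ {ω | t <
          |(1 / (n : ℝ)) * ∑ i, (ξ i ω - (1 / (n : ℝ)) * ∑ j, ξ j ω) ^ 2 - V|}
          ≤ μ ({ω | (n : ℝ) * t ≤ ∑ i, Z1 i ω} ∪ ({ω | (n : ℝ) * (t / 2) ≤ ∑ i, Z2 i ω} ∪
            ({ω | (n : ℝ) * Real.sqrt (t / 2) ≤ ∑ i, Z3 i ω} ∪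
             {ω | (n : ℝ) * Real.sqrt (t / 2) ≤ ∑ i, Z4 i ω}))) := measure_mono hsub
        _ ≤ μ {ω | (n : ℝ) * t ≤ ∑ i, Z1 i ω} + (μ {ω | (n : ℝ) * (t / 2) ≤ ∑ i, Z2 i ω} +
            (μ {ω | (n : ℝ) * Real.sqrt (t / 2) ≤ ∑ i, Z3 i ω} +
             μ {ω | (n : ℝ) * Real.sqrt (t / 2) ≤ ∑ i, Z4 i ω})) := by
            refine le_trans (measure_union_le _ _) ?_
            refine add_le_add_right ?_ _
            refine le_trans (measure_union_le _ _) ?_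
            exact add_le_add_right (measure_union_le _ _) _
        _ ≤ ENNReal.ofReal (exp (-((n : ℝ) * t ^ 2 / (4 * (V + t))))) +
            (ENNReal.ofReal (exp (-((n : ℝ) * (t / 2) ^ 2 / (4 * (V + t / 2))))) +
            (ENNReal.ofReal (exp (-((n : ℝ) * (Real.sqrt (t / 2)) ^ 2 /
                (4 * (V + Real.sqrt (t / 2)))))) +
             ENNReal.ofReal (exp (-((n : ℝ) * (Real.sqrt (t / 2)) ^ 2 /
                (4 * (V + Real.sqrt (t / 2)))))))) := by
            exact add_le_add b1 (add_le_add b2 (add_le_add b3 b4))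
        _ ≤ ENNReal.ofReal e + (ENNReal.ofReal e + (ENNReal.ofReal e + ENNReal.ofReal e)) :=
            add_le_add (ENNReal.ofReal_le_ofReal he1)
              (add_le_add (ENNReal.ofReal_le_ofReal he2)
                (add_le_add (ENNReal.ofReal_le_ofReal he3) (ENNReal.ofReal_le_ofReal he3)))
        _ = ENNReal.ofReal (4 * e) := by
            rw [← ENNReal.ofReal_add (exp_pos _).le (exp_pos _).le,
              ← ENNReal.ofReal_add (exp_pos _).le (by positivity),
              ← ENNReal.ofReal_add (exp_pos _).le (by positivity)]
            congr 1
            ring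
    refine le_trans hsum (ENNReal.ofReal_le_ofReal ?_)
    -- 4 e ≤ 2 exp(-(1/32) n t^2/(V+t))
    set E : ℝ := (n : ℝ) * t ^ 2 / (V + t) with hE
    have hE16 : e = exp (-(E / 32)) * exp (-(E / 32)) := by
      rw [he, ← Real.exp_add]
      congr 1
      rw [hE]
      field_simp
      ring
    have hhalf : exp (-(E / 32)) ≤ 1 / 2 := by
      rw [show (1:ℝ)/2 = exp (- Real.log 2) by
        rw [Real.exp_neg, Real.exp_log two_pos]; norm_num]
      exact exp_le_exp.2 (by linarith)
    have htarg : -(E / 32) = -(1 / 32 * (n : ℝ) * t ^ 2 / (V + t)) := by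
      rw [hE]; ring
    rw [hE16, ← htarg]
    nlinarith [exp_pos (-(E / 32))]
  · -- trivial bound: RHS ≥ 1
    push_neg at hD
    have h1 : (1:ℝ) ≤ 2 * Real.exp (-(1 / 32 * (n : ℝ) * t ^ 2 / (V + t))) := by
      have : exp (- Real.log 2) ≤ exp (-(1 / 32 * (n : ℝ) * t ^ 2 / (V + t))) := by
        apply exp_le_exp.2
        have : 1 / 32 * (n : ℝ) * t ^ 2 / (V + t) = ((n : ℝ) * t ^ 2 / (V + t)) / 32 := by ring
        rw [this]
        linarith
      rw [Real.exp_neg, Real.exp_log two_pos] at this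
      linarith
    calc μ _ ≤ 1 := prob_le_one
    _ = ENNReal.ofReal 1 := ENNReal.ofReal_one.symm
    _ ≤ _ := ENNReal.ofReal_le_ofReal h1
end

section
/- Consider the optimization problem min c'x subject to f_r(x) ≤ 0 for r = 1,…,R and Ax ≤ b, where each f_r is continuous and convex and satisfies the strict-boundary property (for any two distinct x₁, x₂ with f_r(x₁) = f_r(x₂) = 0, one has f_r(θx₁ + (1−θ)x₂) < 0 for all θ ∈ (0,1)), and c ∈ ℝ^d is non-zero. Say that vectors v₁,…,v_k ∈ ℝ^d with k ≤ d−1 satisfy the SCI condition if they are linearly independent and there exist λ₁,…,λ_k > 0 with ∑ᵢλᵢvᵢ = −c. If no collection of k ≤ d−1 rows of A satisfies the SCI condition, then the optimization problem has at most one optimal solution. -/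
open Finset

/-- The SCI (strict cone inclusion) condition for a family of vectors with respect
to an objective vector `c`: the vectors are linearly independent and `-c` is a
strictly positive combination of them. -/
def SCI {d k : ℕ} (c : Fin d → ℝ) (v : Fin k → Fin d → ℝ) : Prop :=
  LinearIndependent ℝ v ∧
    ∃ lam : Fin k → ℝ, (∀ i, 0 < lam i) ∧ ∑ i, lam i • v i = -c

lemma caratheodory_cone {ι E : Type*} [AddCommGroup E] [Module ℝ E]
    (v : ι → E) (s : Finset ι) :
    ∀ (w : ι → ℝ), (∀ i ∈ s, 0 ≤ w i) →
      ∃ t : Finset ι, t ⊆ s ∧ ∃ w' : ι → ℝ, (∀ i ∈ t, 0 < w' i) ∧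
        (∑ i ∈ t, w' i • v i) = ∑ i ∈ s, w i • v i ∧
        LinearIndependent ℝ (fun i : t => v i) := by
  classical
  induction s using Finset.strongInductionOn with
  | _ s ih =>
    intro w hw
    by_cases hz : ∃ i ∈ s, w i = 0
    · obtain ⟨i0, hi0, hwi0⟩ := hz
      obtain ⟨t, hts, w', h1, h2, h3⟩ := ih (s.erase i0) (Finset.erase_ssubset hi0) w
        (fun i hi => hw i (Finset.mem_of_mem_erase hi))
      refine ⟨t, hts.trans (Finset.erase_subset _ _), w', h1, ?_, h3⟩
      rw [h2, Finset.sum_erase]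
      rw [hwi0, zero_smul]
    · push_neg at hz
      have hpos : ∀ i ∈ s, 0 < w i := fun i hi => (hw i hi).lt_of_ne' (hz i hi)
      by_cases hli : LinearIndependent ℝ (fun i : s => v i)
      · exact ⟨s, Finset.Subset.refl s, w, hpos, rfl, hli⟩
      · rw [Fintype.not_linearIndependent_iff] at hli
        obtain ⟨g, hg0, i1, hi1⟩ := hli
        obtain ⟨ε, hε⟩ : ∃ ε : ℝ, ε = if 0 < g i1 then 1 else -1 := ⟨_, rfl⟩
        have hεg : 0 < ε * g i1 := by
          rcases lt_trichotomy (g i1) 0 with h | h | h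
          · rw [hε, if_neg (by linarith)]; nlinarith
          · exact absurd h hi1
          · rw [hε, if_pos h]; nlinarith
        obtain ⟨G, hGdef⟩ : ∃ G : ι → ℝ, G = fun i =>
            if h : i ∈ s then ε * g ⟨i, h⟩ else 0 := ⟨_, rfl⟩
        have hGmem : ∀ (i : s), G i = ε * g i := by
          intro i; rw [hGdef]; simp [i.2]
        have hGsum : ∑ i ∈ s, G i • v i = 0 := by
          rw [← Finset.sum_attach s (fun i => G i • v i)]
          calc ∑ i ∈ s.attach, G i • v (i : ι)
              = ∑ i ∈ s.attach, ε • (g i • v (i : ι)) := by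
                refine Finset.sum_congr rfl (fun i _ => ?_)
                rw [hGmem i, smul_smul]
            _ = ε • ∑ i ∈ s.attach, g i • v (i : ι) := by rw [Finset.smul_sum]
            _ = 0 := by rw [Finset.univ_eq_attach] at hg0; rw [hg0, smul_zero]
        have hi1T : (i1 : ι) ∈ s.filter (fun i => 0 < G i) :=
          Finset.mem_filter.2 ⟨i1.2, by rw [hGmem i1]; exact hεg⟩
        obtain ⟨i0, hi0T, hmin⟩ := (s.filter (fun i => 0 < G i)).exists_min_image
          (fun i => w i / G i) ⟨i1, hi1T⟩
        have hi0s : i0 ∈ s := (Finset.mem_filter.1 hi0T).1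
        have hGi0 : 0 < G i0 := (Finset.mem_filter.1 hi0T).2
        have ht0pos : 0 < w i0 / G i0 := div_pos (hpos i0 hi0s) hGi0
        obtain ⟨w'', hw''def⟩ : ∃ w'' : ι → ℝ, w'' = fun i =>
            w i - (w i0 / G i0) * G i := ⟨_, rfl⟩
        have hw''nonneg : ∀ i ∈ s, 0 ≤ w'' i := by
          intro i hi
          rw [hw''def]
          by_cases hGi : 0 < G i
          · have h1 : (w i0 / G i0) * G i ≤ w i := by
              rw [← div_mul_cancel₀ (w i) (ne_of_gt hGi)]
              exact mul_le_mul_of_nonneg_right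
                (hmin i (Finset.mem_filter.2 ⟨hi, hGi⟩)) hGi.le
            simpa using sub_nonneg.2 h1
          · push_neg at hGi
            have h1 : (w i0 / G i0) * G i ≤ 0 :=
              mul_nonpos_of_nonneg_of_nonpos ht0pos.le hGi
            have h2 := hw i hi
            simp only []
            linarith
        have hw''i0 : w'' i0 = 0 := by
          rw [hw''def]
          simp only []
          rw [div_mul_cancel₀ _ (ne_of_gt hGi0), sub_self]
        have hsum'' : ∑ i ∈ s, w'' i • v i = ∑ i ∈ s, w i • v i := by
          calc ∑ i ∈ s, w'' i • v i
              = ∑ i ∈ s, (w i • v i - (w i0 / G i0) • (G i • v i)) := by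
                refine Finset.sum_congr rfl (fun i _ => ?_)
                rw [hw''def, sub_smul, smul_smul]
            _ = ∑ i ∈ s, w i • v i := by
                rw [Finset.sum_sub_distrib, ← Finset.smul_sum, hGsum, smul_zero, sub_zero]
        obtain ⟨t, hts, w', h1, h2, h3⟩ := ih (s.erase i0) (Finset.erase_ssubset hi0s) w''
          (fun i hi => hw''nonneg i (Finset.mem_of_mem_erase hi))
        refine ⟨t, hts.trans (Finset.erase_subset _ _), w', h1, ?_, h3⟩
        rw [h2, Finset.sum_erase _ (by rw [hw''i0, zero_smul]), hsum'']

/-- The linear "combination" map. -/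
noncomputable def combMap {κ : Type*} [Fintype κ] {d : ℕ}
    (u : κ → EuclideanSpace ℝ (Fin d)) : (κ → ℝ) →ₗ[ℝ] EuclideanSpace ℝ (Fin d) where
  toFun w := ∑ i, w i • u i
  map_add' w₁ w₂ := by
    simp only [Pi.add_apply, add_smul, Finset.sum_add_distrib]
  map_smul' r w := by
    simp only [Pi.smul_apply, smul_eq_mul, RingHom.id_apply, Finset.smul_sum, smul_smul]

lemma isClosed_cone_of_fintype {ι : Type*} [Fintype ι] {d : ℕ}
    (v : ι → EuclideanSpace ℝ (Fin d)) :
    IsClosed {x : EuclideanSpace ℝ (Fin d) |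
      ∃ w : ι → ℝ, (∀ i, 0 ≤ w i) ∧ ∑ i, w i • v i = x} := by
  classical
  have key : {x : EuclideanSpace ℝ (Fin d) |
      ∃ w : ι → ℝ, (∀ i, 0 ≤ w i) ∧ ∑ i, w i • v i = x}
      = ⋃ t ∈ {t : Finset ι | LinearIndependent ℝ (fun i : t => v i)},
        (combMap (fun i : t => v i)) '' {w : ↥t → ℝ | ∀ i, 0 ≤ w i} := by
    ext x
    simp only [Set.mem_setOf_eq, Set.mem_iUnion, Set.mem_image, exists_prop, combMap,
      LinearMap.coe_mk, AddHom.coe_mk]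
    constructor
    · rintro ⟨w, hw, hsum⟩
      obtain ⟨t, -, w', h1, h2, h3⟩ := caratheodory_cone v Finset.univ w (fun i _ => hw i)
      refine ⟨t, h3, fun i => w' i, fun i => (h1 i i.2).le, ?_⟩
      rw [Finset.univ_eq_attach, Finset.sum_attach t (fun i => w' i • v i), h2, ← hsum]
    · rintro ⟨t, -, w, hw, hsum⟩
      refine ⟨fun i => if h : i ∈ t then w ⟨i, h⟩ else 0, fun i => ?_, ?_⟩
      · by_cases h : i ∈ t <;> simp [h, hw]
      · rw [← hsum]
        calc ∑ i, (if h : i ∈ t then w ⟨i, h⟩ else 0) • v i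
            = ∑ i ∈ t, (if h : i ∈ t then w ⟨i, h⟩ else 0) • v i := by
              refine (Finset.sum_subset t.subset_univ (fun i _ hi => ?_)).symm
              rw [dif_neg hi, zero_smul]
          _ = ∑ i ∈ t.attach, (if h : (i : ι) ∈ t then w ⟨i, h⟩ else 0) • v (i : ι) :=
              (Finset.sum_attach t _).symm
          _ = ∑ i : t, w i • v (i : ι) := by
              rw [Finset.univ_eq_attach]
              exact Finset.sum_congr rfl (fun i _ => by rw [dif_pos i.2])
  rw [key]
  refine Set.Finite.isClosed_biUnion (Set.toFinite _) (fun t ht => ?_)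
  have hker : LinearMap.ker (combMap (fun i : t => v i)) = ⊥ := by
    rw [LinearMap.ker_eq_bot']
    intro w hw
    have ht' : LinearIndependent ℝ (fun i : t => v i) := ht
    rw [Fintype.linearIndependent_iff] at ht'
    exact funext (ht' w hw)
  have hemb := LinearMap.isClosedEmbedding_of_injective hker
  have horth : IsClosed {w : ↥t → ℝ | ∀ i, 0 ≤ w i} := by
    have : {w : ↥t → ℝ | ∀ i, 0 ≤ w i} = ⋂ i, {w | 0 ≤ w i} := by
      ext; simp [Set.mem_iInter]
    rw [this]
    exact isClosed_iInter fun i => isClosed_le continuous_const (continuous_apply i)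
  exact hemb.isClosedMap _ horth

open RealInnerProductSpace in
lemma farkas_sum {d : ℕ} {ι : Type*} [Fintype ι] (v : ι → Fin d → ℝ) (c : Fin d → ℝ)
    (h : ∀ z : Fin d → ℝ, (∀ i, ∑ j, v i j * z j ≤ 0) → ∑ j, c j * z j ≤ 0) :
    ∃ w : ι → ℝ, (∀ i, 0 ≤ w i) ∧ ∑ i, w i • v i = c := by
  classical
  let v' : ι → EuclideanSpace ℝ (Fin d) := fun i => WithLp.toLp 2 (v i)
  let c' : EuclideanSpace ℝ (Fin d) := WithLp.toLp 2 c
  set S : Set (EuclideanSpace ℝ (Fin d)) :=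
    {x | ∃ w : ι → ℝ, (∀ i, 0 ≤ w i) ∧ ∑ i, w i • v' i = x} with hS
  by_cases hcS : c' ∈ S
  · obtain ⟨w, hw, hsum⟩ := hcS
    exact ⟨w, hw, by simpa [v', c', WithLp.ofLp_sum] using congrArg WithLp.ofLp hsum⟩
  · exfalso
    let K : ConvexCone ℝ (EuclideanSpace ℝ (Fin d)) :=
      { carrier := S
        smul_mem' := by
          rintro r hr x ⟨w, hw, hsum⟩
          exact ⟨fun i => r * w i, fun i => mul_nonneg hr.le (hw i), by
            rw [← hsum, Finset.smul_sum]
            exact Finset.sum_congr rfl (fun i _ => by rw [smul_smul])⟩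
        add_mem' := by
          rintro x ⟨w₁, hw₁, hsum₁⟩ y ⟨w₂, hw₂, hsum₂⟩
          exact ⟨fun i => w₁ i + w₂ i, fun i => add_nonneg (hw₁ i) (hw₂ i), by
            rw [← hsum₁, ← hsum₂, ← Finset.sum_add_distrib]
            exact Finset.sum_congr rfl (fun i _ => by rw [add_smul])⟩ }
    have hKne : (K : Set (EuclideanSpace ℝ (Fin d))).Nonempty :=
      ⟨0, ⟨0, fun i => le_refl 0, by simp⟩⟩
    have hKcl : IsClosed (K : Set (EuclideanSpace ℝ (Fin d))) := isClosed_cone_of_fintype v'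
    let P : ProperCone ℝ (EuclideanSpace ℝ (Fin d)) :=
      { carrier := S
        add_mem' := fun ha hb => K.add_mem' ha hb
        zero_mem' := ⟨0, fun i => le_refl 0, by simp⟩
        smul_mem' := by
          rintro ⟨r, hr⟩ x ⟨w, hw, hsum⟩
          refine ⟨fun i => r * w i, fun i => mul_nonneg hr (hw i), ?_⟩
          show ∑ i, (r * w i) • v' i = r • x
          rw [← hsum, Finset.smul_sum]
          exact Finset.sum_congr rfl (fun i _ => by rw [smul_smul])
        isClosed' := hKcl }
    obtain ⟨y, hy1, hy2⟩ :=
      P.hyperplane_separation' (x₀ := c') (fun h' => hcS h')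
    have hvK : ∀ i, v' i ∈ K := by
      intro i
      refine ⟨fun k => if k = i then 1 else 0, fun k => by positivity, ?_⟩
      simp [ite_smul]
    have hinner : ∀ (u z : EuclideanSpace ℝ (Fin d)), ⟪u, z⟫ = ∑ j, u j * z j := by
      intro u z
      rw [PiLp.inner_apply]
      exact Finset.sum_congr rfl (fun j _ => by rw [RCLike.inner_apply, conj_trivial, mul_comm])
    have hz : ∀ i, ∑ j, v i j * (-y : EuclideanSpace ℝ (Fin d)) j ≤ 0 := by
      intro i
      have h0 := hy1 (v' i) (show v' i ∈ P from hvK i)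
      rw [hinner] at h0
      have : ∑ j, v i j * (-y : EuclideanSpace ℝ (Fin d)) j = -∑ j, v' i j * y j := by
        rw [← Finset.sum_neg_distrib]
        refine Finset.sum_congr rfl (fun j _ => ?_)
        show v i j * (-(y j)) = -(v i j * y j)
        ring
      rw [this]
      linarith
    have hcy := h (WithLp.ofLp (-y : EuclideanSpace ℝ (Fin d))) hz
    rw [hinner] at hy2
    have : ∑ j, c j * (-y : EuclideanSpace ℝ (Fin d)) j = -∑ j, y j * c' j := by
      rw [← Finset.sum_neg_distrib]
      refine Finset.sum_congr rfl (fun j _ => ?_)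
      show c j * (-(y j)) = -(y j * c j)
      ring
    rw [this] at hcy
    have hyc : ∑ j, y j * c' j = ∑ j, c' j * y j := Finset.sum_congr rfl (fun j _ => mul_comm _ _)
    linarith

/-- Uniqueness of optimal solutions of a convex program with linear objective when
no small collection of rows of the linear constraint matrix satisfies the SCI
condition. -/
theorem sci_implies_unique_optimum
    {d R L : ℕ} (c : Fin d → ℝ) (hc : c ≠ 0)
    (f : Fin R → (Fin d → ℝ) → ℝ)
    (hfcont : ∀ r, Continuous (f r))
    (hfconv : ∀ r, ConvexOn ℝ Set.univ (f r))
    -- strict-boundary property of each `f r`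
    (hstrict : ∀ r, ∀ x₁ x₂ : Fin d → ℝ, x₁ ≠ x₂ → f r x₁ = 0 → f r x₂ = 0 →
      ∀ θ : ℝ, θ ∈ Set.Ioo (0 : ℝ) 1 → f r (θ • x₁ + (1 - θ) • x₂) < 0)
    (a : Fin L → Fin d → ℝ) (b : Fin L → ℝ)
    -- no collection of at most `d-1` rows of `A` satisfies SCI
    (hnoSCI : ∀ k : ℕ, k ≤ d - 1 → ∀ σ : Fin k → Fin L, Function.Injective σ →
      ¬ SCI c (a ∘ σ))
    -- two optimal solutions coincide
    (x y : Fin d → ℝ)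
    (hxfeas : (∀ r, f r x ≤ 0) ∧ ∀ l, ∑ j, a l j * x j ≤ b l)
    (hyfeas : (∀ r, f r y ≤ 0) ∧ ∀ l, ∑ j, a l j * y j ≤ b l)
    (hxopt : ∀ z : Fin d → ℝ, ((∀ r, f r z ≤ 0) ∧ ∀ l, ∑ j, a l j * z j ≤ b l) →
      ∑ j, c j * x j ≤ ∑ j, c j * z j)
    (hyopt : ∀ z : Fin d → ℝ, ((∀ r, f r z ≤ 0) ∧ ∀ l, ∑ j, a l j * z j ≤ b l) →
      ∑ j, c j * y j ≤ ∑ j, c j * z j) :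
    x = y := by
  classical
  by_contra hne
  have hcxy : ∑ j, c j * x j = ∑ j, c j * y j :=
    le_antisymm (hxopt y hyfeas) (hyopt x hxfeas)
  set m : Fin d → ℝ := (2⁻¹ : ℝ) • x + (1 - 2⁻¹ : ℝ) • y with hm
  have hmj : ∀ j, m j = 2⁻¹ * x j + (1 - 2⁻¹) * y j := by
    intro j; rw [hm]; simp
  have hsum : ∀ u : Fin d → ℝ, ∑ j, u j * m j
      = 2⁻¹ * (∑ j, u j * x j) + (1 - 2⁻¹) * (∑ j, u j * y j) := by
    intro u
    rw [Finset.mul_sum, Finset.mul_sum, ← Finset.sum_add_distrib]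
    refine Finset.sum_congr rfl (fun j _ => ?_)
    rw [hmj j]; ring
  -- m strictly satisfies the nonlinear constraints
  have hfm : ∀ r, f r m < 0 := by
    intro r
    by_cases h0 : f r x = 0 ∧ f r y = 0
    · rw [hm]
      exact hstrict r x y hne h0.1 h0.2 2⁻¹ ⟨by norm_num, by norm_num⟩
    · have hconv := (hfconv r).2 (Set.mem_univ x) (Set.mem_univ y)
        (by norm_num : (0:ℝ) ≤ 2⁻¹) (by norm_num : (0:ℝ) ≤ 1 - 2⁻¹) (by norm_num)
      have hlt : 2⁻¹ * f r x + (1 - 2⁻¹) * f r y < 0 := by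
        rcases not_and_or.1 h0 with h | h
        · have h1 : f r x < 0 := (hxfeas.1 r).lt_of_ne h
          have h2 := hyfeas.1 r
          nlinarith
        · have h1 : f r y < 0 := (hyfeas.1 r).lt_of_ne h
          have h2 := hxfeas.1 r
          nlinarith
      calc f r m ≤ 2⁻¹ * f r x + (1 - 2⁻¹) * f r y := by
            rw [hm]; simpa using hconv
        _ < 0 := hlt
  -- m satisfies linear constraints
  have hm_lin : ∀ l, ∑ j, a l j * m j ≤ b l := by
    intro l
    rw [hsum (a l)]
    have h1 := hxfeas.2 l
    have h2 := hyfeas.2 l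
    nlinarith
  have hm_feas : (∀ r, f r m ≤ 0) ∧ ∀ l, ∑ j, a l j * m j ≤ b l :=
    ⟨fun r => (hfm r).le, hm_lin⟩
  have hcm : ∑ j, c j * m j = ∑ j, c j * x j := by
    rw [hsum c, hcxy]; ring
  -- active set
  set Act : Finset (Fin L) := univ.filter (fun l => ∑ j, a l j * m j = b l) with hAct
  -- the descent condition
  have key : ∀ z : Fin d → ℝ, (∀ i : ↥Act, ∑ j, a (i : Fin L) j * z j ≤ 0) →
      ∑ j, (-c) j * z j ≤ 0 := by
    intro z hz
    have hneg : ∑ j, (-c) j * z j = -∑ j, c j * z j := by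
      rw [← Finset.sum_neg_distrib]
      exact Finset.sum_congr rfl (fun j _ => by simp)
    rw [hneg, neg_nonpos]
    by_contra hcz
    push_neg at hcz
    have hexp : ∀ (u : Fin d → ℝ) (t : ℝ), ∑ j, u j * (m + t • z) j
        = (∑ j, u j * m j) + t * ∑ j, u j * z j := by
      intro u t
      rw [Finset.mul_sum, ← Finset.sum_add_distrib]
      refine Finset.sum_congr rfl (fun j _ => ?_)
      show u j * (m j + t * z j) = u j * m j + t * (u j * z j)
      ring
    have hev1 : ∀ r : Fin R, ∀ᶠ t : ℝ in nhds 0, f r (m + t • z) < 0 := by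
      intro r
      have hcont : Continuous fun t : ℝ => f r (m + t • z) :=
        (hfcont r).comp (continuous_const.add (continuous_id.smul continuous_const))
      have := (hcont.tendsto 0).eventually_lt_const (by simpa using hfm r)
      exact this
    have hev2 : ∀ l : Fin L, ∀ᶠ t : ℝ in nhds 0,
        l ∉ Act → ∑ j, a l j * (m + t • z) j < b l := by
      intro l
      by_cases hl : l ∈ Act
      · exact Filter.Eventually.of_forall (fun t h => absurd hl h)
      · have hlt : ∑ j, a l j * m j < b l :=
          lt_of_le_of_ne (hm_lin l) (by simpa [hAct] using hl)
        have hfun : (fun t : ℝ => ∑ j, a l j * (m + t • z) j)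
            = fun t => (∑ j, a l j * m j) + t * ∑ j, a l j * z j :=
          funext (fun t => hexp (a l) t)
        have hcont : Continuous fun t : ℝ => ∑ j, a l j * (m + t • z) j := by
          rw [hfun]
          exact continuous_const.add (continuous_id.mul continuous_const)
        have := (hcont.tendsto 0).eventually_lt_const (by simpa [hexp (a l) 0] using hlt)
        exact this.mono (fun t ht _ => ht)
    have hev : ∀ᶠ t : ℝ in nhds 0, (∀ r, f r (m + t • z) < 0) ∧
        ∀ l, l ∉ Act → ∑ j, a l j * (m + t • z) j < b l :=
      (Filter.eventually_all.2 hev1).and (Filter.eventually_all.2 hev2)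
    have hself : ∀ᶠ t : ℝ in nhdsWithin 0 (Set.Ioi (0:ℝ)), t ∈ Set.Ioi (0:ℝ) :=
      self_mem_nhdsWithin
    obtain ⟨t, ⟨ht1, ht2⟩, htpos⟩ :=
      ((hev.filter_mono nhdsWithin_le_nhds).and hself).exists
    have htpos' : 0 < t := htpos
    -- the point m + t • z is feasible with smaller objective
    have hfeas : (∀ r, f r (m + t • z) ≤ 0) ∧
        ∀ l, ∑ j, a l j * (m + t • z) j ≤ b l := by
      refine ⟨fun r => (ht1 r).le, fun l => ?_⟩
      by_cases hl : l ∈ Act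
      · rw [hexp (a l)]
        have h1 : ∑ j, a l j * m j = b l := by
          have := Finset.mem_filter.1 hl
          exact this.2
        have h2 : ∑ j, a l j * z j ≤ 0 := hz ⟨l, hl⟩
        nlinarith
      · exact (ht2 l hl).le
    have hobj := hxopt _ hfeas
    rw [hexp c t] at hobj
    nlinarith
  -- Farkas
  obtain ⟨w, hw, hwsum⟩ := farkas_sum (fun l : ↥Act => a (l : Fin L)) (-c) key
  -- extend the weights to Fin L
  set W : Fin L → ℝ := fun l => if h : l ∈ Act then w ⟨l, h⟩ else 0 with hW
  have hWnonneg : ∀ l ∈ Act, 0 ≤ W l := by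
    intro l hl
    rw [hW]
    simp only [dif_pos hl]
    exact hw _
  have hWsum : ∑ l ∈ Act, W l • a l = -c := by
    rw [← Finset.sum_attach Act (fun l => W l • a l)]
    rw [← hwsum, Finset.univ_eq_attach]
    refine Finset.sum_congr rfl (fun l _ => ?_)
    rw [hW]
    simp only [dif_pos l.2]
  -- Caratheodory
  obtain ⟨t, hts, w', hpos', hsum', hli⟩ := caratheodory_cone a Act W hWnonneg
  rw [hWsum] at hsum'
  have hli' : LinearIndependent ℝ (M := EuclideanSpace ℝ (Fin d))
      (fun l : ↥t => WithLp.toLp 2 (a (l : Fin L))) :=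
    hli.map' (WithLp.linearEquiv 2 ℝ (Fin d → ℝ)).symm.toLinearMap (LinearEquiv.ker _)
  have hkd : t.card ≤ d := by
    have := hli'.fintype_card_le_finrank
    rwa [Fintype.card_coe, finrank_euclideanSpace_fin] at this
  have hd : 0 < d := by
    rcases Nat.eq_zero_or_pos d with h | h
    · subst h
      exact absurd (funext fun j : Fin 0 => j.elim0) hc
    · exact h
  by_cases hcase : t.card ≤ d - 1
  · -- SCI contradiction
    set σ : Fin t.card → Fin L := fun i => ((t.orderIsoOfFin rfl i : ↥t) : Fin L) with hσ
    have hσinj : Function.Injective σ := by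
      intro i j hij
      exact (t.orderIsoOfFin rfl).injective (Subtype.ext hij)
    refine hnoSCI t.card hcase σ hσinj ⟨?_, fun i => w' (σ i), fun i => hpos' _ (t.orderIsoOfFin rfl i).2, ?_⟩
    · have : (a ∘ σ) = (fun l : ↥t => a (l : Fin L)) ∘ (fun i => t.orderIsoOfFin rfl i) := rfl
      rw [this]
      exact hli.comp _ (t.orderIsoOfFin rfl).injective
    · calc ∑ i, w' (σ i) • (a ∘ σ) i
          = ∑ l : ↥t, w' (l : Fin L) • a (l : Fin L) :=
            Fintype.sum_equiv (t.orderIsoOfFin rfl).toEquiv _ _ (fun i => rfl)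
        _ = ∑ l ∈ t, w' l • a l := by
            rw [Finset.univ_eq_attach, Finset.sum_attach t (fun l => w' l • a l)]
        _ = -c := hsum'
  · -- k = d : x = y, contradiction
    have hcard : t.card = d := le_antisymm hkd (by omega)
    let u : EuclideanSpace ℝ (Fin d) := WithLp.toLp 2 (fun j => x j - y j)
    have hu0 : u ≠ 0 := by
      intro h
      apply hne
      funext j
      have := congrArg (fun v : EuclideanSpace ℝ (Fin d) => v j) h
      simpa [u, sub_eq_zero] using this
    have hactive : ∀ l ∈ t, ∑ j, a l j * x j = b l ∧ ∑ j, a l j * y j = b l := by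
      intro l hl
      have hlAct : l ∈ Act := hts hl
      have heq : ∑ j, a l j * m j = b l := (Finset.mem_filter.1 hlAct).2
      rw [hsum (a l)] at heq
      have h1 := hxfeas.2 l
      have h2 := hyfeas.2 l
      constructor <;> nlinarith
    obtain ⟨A, hA⟩ : ∃ A : ↥t → EuclideanSpace ℝ (Fin d), ∀ l, A l = WithLp.toLp 2 (a (l : Fin L)) :=
      ⟨fun l => WithLp.toLp 2 (a (l : Fin L)), fun l => rfl⟩
    have hAfun : A = fun l : ↥t => WithLp.toLp 2 (a (l : Fin L) : Fin d → ℝ) := funext hA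
    have hliA : LinearIndependent ℝ A := by rw [hAfun]; exact hli'
    have hspan : Submodule.span ℝ (Set.range A) = ⊤ :=
      hliA.span_eq_top_of_card_eq_finrank'
        (by rw [Fintype.card_coe, hcard, finrank_euclideanSpace_fin])
    obtain ⟨g, hg⟩ := (Submodule.mem_span_range_iff_exists_fun ℝ).1
      (hspan ▸ Submodule.mem_top : u ∈ Submodule.span ℝ (Set.range A))
    have hinner0 : ∀ l : ↥t, (inner ℝ (A l) u : ℝ) = 0 := by
      intro l
      rw [PiLp.inner_apply]
      have h1 := (hactive l l.2).1
      have h2 := (hactive l l.2).2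
      have hst : ∑ j, A l j * u j
          = (∑ j, a (l : Fin L) j * x j) - ∑ j, a (l : Fin L) j * y j := by
        rw [hAfun, ← Finset.sum_sub_distrib]
        refine Finset.sum_congr rfl (fun j _ => ?_)
        show a (l : Fin L) j * (x j - y j) = a (l : Fin L) j * x j - a (l : Fin L) j * y j
        ring
      calc ∑ j, u j * (starRingEnd ℝ) (A l j)
          = ∑ j, A l j * u j :=
            Finset.sum_congr rfl (fun j _ => by rw [conj_trivial, mul_comm])
        _ = (∑ j, a (l : Fin L) j * x j) - ∑ j, a (l : Fin L) j * y j := hst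
        _ = 0 := by rw [h1, h2, sub_self]
    have huu : (inner ℝ u u : ℝ) = 0 := by
      nth_rewrite 1 [← hg]
      rw [sum_inner]
      rw [Finset.sum_eq_zero]
      intro l _
      rw [real_inner_smul_left, hinner0 l, mul_zero]
    exact hu0 (inner_self_eq_zero.1 huu)
end

section
/- Let Σ ∈ ℝ^{d×d} be positive definite and μ ∈ ℝ^d, s > 0, b ∈ ℝ with b ≠ 0. Define g(x) = μ'x + s·‖Σx‖₂. If x₁ ≠ x₂ are two points with g(x₁) = g(x₂) = b, then for every θ ∈ (0,1) the point x_θ = θx₁ + (1−θ)x₂ satisfies g(x_θ) < b. -/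
/-!
Write `g = ℓ + s‖φ ·‖` with `ℓ` linear and `φ = Σ` injective (as `Σ` is positive definite) into
the strictly convex space `EuclideanSpace`. If `x₁, x₂` are not on a common ray, neither are
`φ x₁, φ x₂`, and the strict triangle inequality puts `g` strictly below its chord. If they are,
then `x₂ = r • x₁` with `r > 0` (neither is `0`, since `g 0 = 0 ≠ b`), and positive homogeneity
gives `r * b = b`, so `r = 1` and `x₁ = x₂`.
-/

section LevelSet

variable {V : Type*} [AddCommGroup V] [Module ℝ V]

theorem SameRay.eq_of_posHomogeneous_eq {g : V → ℝ}
    (hg : ∀ r : ℝ, 0 ≤ r → ∀ x, g (r • x) = r * g x) {x₁ x₂ : V} {b : ℝ} (hb : b ≠ 0)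
    (h₁ : g x₁ = b) (h₂ : g x₂ = b) (h : SameRay ℝ x₁ x₂) : x₁ = x₂ := by
  have hg0 : g 0 = 0 := by simpa using hg 0 le_rfl 0
  have hx₁ : x₁ ≠ 0 := by rintro rfl; exact hb (h₁ ▸ hg0)
  have hx₂ : x₂ ≠ 0 := by rintro rfl; exact hb (h₂ ▸ hg0)
  obtain ⟨r, hr, rfl⟩ := h.exists_pos_left hx₁ hx₂
  have hrb : r * b = b := by rw [← h₁, ← hg r hr.le, h₁, h₂]
  have hr1 : r = 1 := by
    have : (r - 1) * b = 0 := by rw [sub_mul, hrb, one_mul, sub_self]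
    simpa [sub_eq_zero, hb] using this
  rw [hr1, one_smul]

variable {E : Type*} [NormedAddCommGroup E] [NormedSpace ℝ E] [StrictConvexSpace ℝ E]

theorem norm_map_smul_add_smul_lt_of_not_sameRay {φ : V →ₗ[ℝ] E} (hφ : Function.Injective φ)
    {x₁ x₂ : V} (h : ¬SameRay ℝ x₁ x₂) {θ : ℝ} (hθ : θ ∈ Set.Ioo (0 : ℝ) 1) :
    ‖φ (θ • x₁ + (1 - θ) • x₂)‖ < θ * ‖φ x₁‖ + (1 - θ) * ‖φ x₂‖ := by
  obtain ⟨hθ₀, hθ₁⟩ := hθ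
  have hθ' : 0 < 1 - θ := sub_pos.mpr hθ₁
  have hray : ¬SameRay ℝ (θ • φ x₁) ((1 - θ) • φ x₂) := by
    intro hs
    have := (hs.pos_smul_left (inv_pos.mpr hθ₀)).pos_smul_right (inv_pos.mpr hθ')
    rw [inv_smul_smul₀ hθ₀.ne', inv_smul_smul₀ hθ'.ne', hφ.sameRay_map_iff] at this
    exact h this
  calc ‖φ (θ • x₁ + (1 - θ) • x₂)‖ = ‖θ • φ x₁ + (1 - θ) • φ x₂‖ := by
        rw [map_add, map_smul, map_smul]
    _ < ‖θ • φ x₁‖ + ‖(1 - θ) • φ x₂‖ := norm_add_lt_of_not_sameRay hray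
    _ = θ * ‖φ x₁‖ + (1 - θ) * ‖φ x₂‖ := by
        rw [norm_smul, norm_smul, Real.norm_of_nonneg hθ₀.le, Real.norm_of_nonneg hθ'.le]

theorem apply_add_mul_norm_map_smul_add_smul_lt (ℓ : V →ₗ[ℝ] ℝ) {φ : V →ₗ[ℝ] E}
    (hφ : Function.Injective φ) {s b : ℝ} (hs : 0 < s) (hb : b ≠ 0) {x₁ x₂ : V}
    (hne : x₁ ≠ x₂) (h₁ : ℓ x₁ + s * ‖φ x₁‖ = b) (h₂ : ℓ x₂ + s * ‖φ x₂‖ = b)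
    {θ : ℝ} (hθ : θ ∈ Set.Ioo (0 : ℝ) 1) :
    ℓ (θ • x₁ + (1 - θ) • x₂) + s * ‖φ (θ • x₁ + (1 - θ) • x₂)‖ < b := by
  have hhom : ∀ r : ℝ, 0 ≤ r → ∀ x, ℓ (r • x) + s * ‖φ (r • x)‖ = r * (ℓ x + s * ‖φ x‖) := by
    intro r hr x
    rw [map_smul, map_smul, norm_smul, Real.norm_of_nonneg hr, smul_eq_mul]
    ring
  have hray : ¬SameRay ℝ x₁ x₂ := fun h =>
    hne (h.eq_of_posHomogeneous_eq (g := fun x => ℓ x + s * ‖φ x‖) hhom hb h₁ h₂)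
  have hnorm := norm_map_smul_add_smul_lt_of_not_sameRay hφ hray hθ
  calc ℓ (θ • x₁ + (1 - θ) • x₂) + s * ‖φ (θ • x₁ + (1 - θ) • x₂)‖
      = θ * ℓ x₁ + (1 - θ) * ℓ x₂ + s * ‖φ (θ • x₁ + (1 - θ) • x₂)‖ := by simp
    _ < θ * ℓ x₁ + (1 - θ) * ℓ x₂ + s * (θ * ‖φ x₁‖ + (1 - θ) * ‖φ x₂‖) := by gcongr
    _ = θ * (ℓ x₁ + s * ‖φ x₁‖) + (1 - θ) * (ℓ x₂ + s * ‖φ x₂‖) := by ring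
    _ = b := by rw [h₁, h₂]; ring

end LevelSet

theorem Matrix.PosDef.mulVec_injective {n : Type*} [Fintype n] [DecidableEq n]
    {A : Matrix n n ℝ} (hA : A.PosDef) : Function.Injective A.mulVec :=
  mulVec_injective_iff_isUnit.mpr hA.isUnit

theorem EuclideanSpace.norm_toLp {n : Type*} [Fintype n] (x : n → ℝ) :
    ‖WithLp.toLp 2 x‖ = Real.sqrt (∑ i, x i ^ 2) := by
  simp [EuclideanSpace.norm_eq]

/-- For `g(x) = μ'x + s‖Σx‖₂` with `Σ` positive definite, `s > 0` and `b ≠ 0`, the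
level set `{g = b}` contains no segments: midpoints of two distinct points on the
level set lie strictly below `b`. -/
theorem ellipsoidal_constraint_strictly_convex_boundary
    {d : ℕ} (A : Matrix (Fin d) (Fin d) ℝ) (hA : A.PosDef)
    (μ : Fin d → ℝ) (s : ℝ) (hs : 0 < s) (b : ℝ) (hb : b ≠ 0)
    (x₁ x₂ : Fin d → ℝ) (hne : x₁ ≠ x₂)
    (h₁ : ∑ i, μ i * x₁ i + s * Real.sqrt (∑ i, (A.mulVec x₁ i) ^ 2) = b)
    (h₂ : ∑ i, μ i * x₂ i + s * Real.sqrt (∑ i, (A.mulVec x₂ i) ^ 2) = b) :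
    ∀ θ : ℝ, θ ∈ Set.Ioo (0 : ℝ) 1 →
      ∑ i, μ i * (θ • x₁ + (1 - θ) • x₂) i
        + s * Real.sqrt (∑ i, (A.mulVec (θ • x₁ + (1 - θ) • x₂) i) ^ 2) < b := by
  intro θ hθ
  let φ : (Fin d → ℝ) →ₗ[ℝ] EuclideanSpace ℝ (Fin d) :=
    (WithLp.linearEquiv 2 ℝ (Fin d → ℝ)).symm.toLinearMap ∘ₗ A.mulVecLin
  have hφ : Function.Injective φ :=
    (WithLp.linearEquiv 2 ℝ (Fin d → ℝ)).symm.injective.comp hA.mulVec_injective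
  have hg : ∀ x, ∑ i, μ i * x i + s * Real.sqrt (∑ i, (A.mulVec x i) ^ 2)
      = dotProductBilin ℝ ℝ μ x + s * ‖φ x‖ := fun x => by
    rw [EuclideanSpace.norm_toLp]; rfl
  rw [hg] at h₁ h₂ ⊢
  exact apply_add_mul_norm_map_smul_add_smul_lt _ hφ hs hb hne h₁ h₂ hθ
end

section
/- Let h(x, ξ) = 1(a'ₖAₖ(x) ≤ bₖ for k = 1,…,K) where each Aₖ : ℝ^d → ℝ^{mₖ} is continuous, and for each k either aₖ has a density on ℝ^{mₖ} and bₖ is a non-zero constant, or (aₖ, bₖ) has a joint density on ℝ^{mₖ+1}. Then the map x ↦ h(x, ξ) is L²-continuous: for any x ∈ X, lim_{x'→x} E[(h(x', ξ) − h(x, ξ))²] = 0. -/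
open MeasureTheory Filter Topology

lemma hyperplane_volume_eq_zero {n : ℕ} (c : Fin n → ℝ) (hc : c ≠ 0) (t : ℝ) :
    volume {v : Fin n → ℝ | ∑ i, c i * v i = t} = 0 := by
  obtain ⟨i, hi⟩ := Function.ne_iff.mp hc
  have hi : c i ≠ 0 := hi
  let f : (Fin n → ℝ) →ₗ[ℝ] ℝ :=
  { toFun := fun v => ∑ j, c j * v j
    map_add' := by intro u v; simp [mul_add, Finset.sum_add_distrib]
    map_smul' := by
      intro r v
      simp only [Pi.smul_apply, smul_eq_mul, RingHom.id_apply, Finset.mul_sum]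
      exact Finset.sum_congr rfl fun j _ => by ring
  }
  have hfi : f (Pi.single i 1) = c i := by
    simp [f, Pi.single_apply, mul_ite, Finset.sum_ite_eq']
  have hker : LinearMap.ker f ≠ ⊤ := by
    intro h
    have h1 : Pi.single i 1 ∈ LinearMap.ker f := by rw [h]; trivial
    have : f (Pi.single i 1) = 0 := h1
    rw [hfi] at this; exact hi this
  set v₀ : Fin n → ℝ := (t / c i) • (Pi.single i 1 : Fin n → ℝ) with hv₀
  have hfv₀ : f v₀ = t := by
    rw [hv₀, _root_.map_smul, hfi, smul_eq_mul]
    field_simp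
  have hset : {v : Fin n → ℝ | ∑ j, c j * v j = t}
      = (fun v => v + (-v₀)) ⁻¹' (LinearMap.ker f : Set (Fin n → ℝ)) := by
    ext v
    simp only [Set.mem_setOf_eq, Set.mem_preimage, SetLike.mem_coe, LinearMap.mem_ker, map_add,
      map_neg, hfv₀]
    constructor
    · intro h; change (∑ j, c j * v j) + -t = 0; rw [h]; ring
    · intro h; have : (∑ j, c j * v j) + -t = 0 := h; linarith
  rw [hset, measure_preimage_add_right]
  exact Measure.addHaar_submodule volume (LinearMap.ker f) hker


/-- L²-continuity in the decision variable of the indicator of a random linear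
system of inequalities, under density assumptions on the random coefficients. -/
theorem indicator_L2_continuous
    {Ω : Type*} [MeasurableSpace Ω] (μ : Measure Ω) [IsProbabilityMeasure μ]
    (d K : ℕ) (m : Fin K → ℕ)
    (A : (k : Fin K) → (Fin d → ℝ) → (Fin (m k) → ℝ))
    (hA : ∀ k, Continuous (A k))
    (a : (k : Fin K) → Ω → (Fin (m k) → ℝ)) (b : Fin K → Ω → ℝ)
    (hameas : ∀ k, Measurable (a k)) (hbmeas : ∀ k, Measurable (b k))
    -- for each k: either `a k` has a density and `b k` is a non-zero constant,
    -- or `(a k, b k)` has a joint density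
    (hdens : ∀ k,
      ((∃ cst : ℝ, cst ≠ 0 ∧ ∀ ω, b k ω = cst) ∧
        μ.map (a k) ≪ (volume : Measure (Fin (m k) → ℝ)))
      ∨ μ.map (fun ω => Fin.snoc (a k ω) (b k ω))
          ≪ (volume : Measure (Fin (m k + 1) → ℝ))) :
    ∀ x : Fin d → ℝ,
      Tendsto
        (fun x' : Fin d → ℝ => ∫ ω,
          (Set.indicator {ω' | ∀ k, ∑ i, a k ω' i * A k x' i ≤ b k ω'} (fun _ => (1 : ℝ)) ω
            - Set.indicator {ω' | ∀ k, ∑ i, a k ω' i * A k x i ≤ b k ω'} (fun _ => (1 : ℝ)) ω) ^ 2 ∂μ)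
        (𝓝 x) (𝓝 0) := by
  intro x
  -- measurability of the per-point sums
  have hgmeas : ∀ (y : Fin d → ℝ) (k : Fin K),
      Measurable (fun ω => ∑ i, a k ω i * A k y i) := by
    intro y k
    exact Finset.measurable_sum _ fun i _ =>
      ((measurable_pi_apply i).comp (hameas k)).mul measurable_const
  have hSmeas : ∀ y : Fin d → ℝ,
      MeasurableSet {ω' | ∀ k, ∑ i, a k ω' i * A k y i ≤ b k ω'} := by
    intro y
    rw [Set.setOf_forall]
    exact MeasurableSet.iInter fun k => measurableSet_le (hgmeas y k) (hbmeas k)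
  have hind : ∀ y : Fin d → ℝ,
      Measurable (Set.indicator {ω' | ∀ k, ∑ i, a k ω' i * A k y i ≤ b k ω'}
        (fun _ => (1 : ℝ))) := fun y => measurable_const.indicator (hSmeas y)
  -- the indicator takes values 0 or 1
  have hind01 : ∀ (s : Set Ω) (ω : Ω),
      Set.indicator s (fun _ => (1 : ℝ)) ω = 0 ∨ Set.indicator s (fun _ => (1 : ℝ)) ω = 1 := by
    intro s ω
    by_cases h : ω ∈ s
    · right; simp [h]
    · left; simp [h]
  -- a.e. non-degeneracy at x
  have hae : ∀ᵐ ω ∂μ, ∀ k, ∑ i, a k ω i * A k x i ≠ b k ω := by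
    rw [eventually_all]
    intro k
    have hnull : μ {ω | ∑ i, a k ω i * A k x i = b k ω} = 0 := by
      rcases hdens k with ⟨⟨cst, hcst, hb⟩, hac⟩ | hac
      · -- constant b, density on a
        have hT : MeasurableSet {v : Fin (m k) → ℝ | ∑ i, A k x i * v i = cst} := by
          have : Continuous fun v : Fin (m k) → ℝ => ∑ i, A k x i * v i :=
            continuous_finset_sum _ fun i _ => continuous_const.mul (continuous_apply i)
          exact this.measurable (measurableSet_singleton cst)
        have hpre : {ω | ∑ i, a k ω i * A k x i = b k ω}
            = a k ⁻¹' {v | ∑ i, A k x i * v i = cst} := by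
          ext ω
          simp only [Set.mem_setOf_eq, Set.mem_preimage, hb ω]
          constructor <;> intro h <;> rw [← h] <;>
            exact Finset.sum_congr rfl fun i _ => by ring
        rw [hpre, ← Measure.map_apply (hameas k) hT]
        apply hac
        by_cases hAx : A k x = 0
        · have : {v : Fin (m k) → ℝ | ∑ i, A k x i * v i = cst} = ∅ := by
            ext v; simp [hAx, Ne.symm hcst]
          simp [this]
        · exact hyperplane_volume_eq_zero (A k x) hAx cst
      · -- joint density
        set c : Fin (m k + 1) → ℝ := Fin.snoc (A k x) (-1) with hc
        have hcne : c ≠ 0 := by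
          intro h
          have := congrFun h (Fin.last (m k))
          simp [hc, Fin.snoc_last] at this
        have hφmeas : Measurable (fun ω => (Fin.snoc (a k ω) (b k ω) : Fin (m k + 1) → ℝ)) := by
          rw [measurable_pi_iff]
          intro j
          induction j using Fin.lastCases with
          | last => simpa [Fin.snoc_last] using hbmeas k
          | cast i => simpa [Fin.snoc_castSucc, Function.comp_def] using (measurable_pi_apply i).comp (hameas k)
        have hT : MeasurableSet {w : Fin (m k + 1) → ℝ | ∑ j, c j * w j = 0} := by
          have : Continuous fun w : Fin (m k + 1) → ℝ => ∑ j, c j * w j :=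
            continuous_finset_sum _ fun j _ => continuous_const.mul (continuous_apply j)
          exact this.measurable (measurableSet_singleton 0)
        have hpre : {ω | ∑ i, a k ω i * A k x i = b k ω}
            = (fun ω => (Fin.snoc (a k ω) (b k ω) : Fin (m k + 1) → ℝ))
              ⁻¹' {w | ∑ j, c j * w j = 0} := by
          ext ω
          simp only [Set.mem_setOf_eq, Set.mem_preimage]
          have hsum : ∑ j, c j * (Fin.snoc (a k ω) (b k ω) : Fin (m k + 1) → ℝ) j
              = (∑ i, a k ω i * A k x i) - b k ω := by
            rw [Fin.sum_univ_castSucc]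
            simp only [hc, Fin.snoc_castSucc, Fin.snoc_last]
            rw [sub_eq_add_neg]
            congr 1
            · exact Finset.sum_congr rfl fun i _ => by ring
            · ring
          rw [hsum, sub_eq_zero]
        rw [hpre, ← Measure.map_apply hφmeas hT]
        exact hac (hyperplane_volume_eq_zero c hcne 0)
    rw [ae_iff]
    simpa only [not_not] using hnull
  -- dominated convergence
  have h0 : (0 : ℝ) = ∫ _ω, (0 : ℝ) ∂μ := by simp
  rw [h0]
  apply tendsto_integral_filter_of_dominated_convergence (fun _ => (1 : ℝ))
  · exact Eventually.of_forall fun x' =>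
      (((hind x').sub (hind x)).pow_const 2).aestronglyMeasurable
  · refine Eventually.of_forall fun x' => Eventually.of_forall fun ω => ?_
    rcases hind01 {ω' | ∀ k, ∑ i, a k ω' i * A k x' i ≤ b k ω'} ω with h1 | h1 <;>
      rcases hind01 {ω' | ∀ k, ∑ i, a k ω' i * A k x i ≤ b k ω'} ω with h2 | h2 <;>
        rw [h1, h2] <;> norm_num
  · exact integrable_const 1
  · filter_upwards [hae] with ω hω
    have hev : ∀ᶠ x' in 𝓝 x,
        (Set.indicator {ω' | ∀ k, ∑ i, a k ω' i * A k x' i ≤ b k ω'} (fun _ => (1 : ℝ)) ω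
          - Set.indicator {ω' | ∀ k, ∑ i, a k ω' i * A k x i ≤ b k ω'} (fun _ => (1 : ℝ)) ω) ^ 2
        = 0 := by
      have hkall : ∀ᶠ x' in 𝓝 x, ∀ k,
          ((∑ i, a k ω i * A k x' i ≤ b k ω) ↔ (∑ i, a k ω i * A k x i ≤ b k ω)) := by
        rw [eventually_all]
        intro k
        have hcont : Continuous fun y : Fin d → ℝ => ∑ i, a k ω i * A k y i :=
          continuous_finset_sum _ fun i _ =>
            continuous_const.mul ((continuous_apply i).comp (hA k))
        have htend : Tendsto (fun y : Fin d → ℝ => ∑ i, a k ω i * A k y i) (𝓝 x)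
            (𝓝 (∑ i, a k ω i * A k x i)) := hcont.tendsto x
        rcases lt_or_gt_of_ne (hω k) with h | h
        · filter_upwards [htend.eventually_lt_const h] with x' hx'
          simp [hx'.le, h.le]
        · filter_upwards [htend.eventually_const_lt h] with x' hx'
          simp [not_le.2 hx', not_le.2 h]
      filter_upwards [hkall] with x' hx'
      have : (ω ∈ {ω' | ∀ k, ∑ i, a k ω' i * A k x' i ≤ b k ω'})
          ↔ (ω ∈ {ω' | ∀ k, ∑ i, a k ω' i * A k x i ≤ b k ω'}) := by
        simp only [Set.mem_setOf_eq]
        exact forall_congr' hx'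
      by_cases hm : ω ∈ {ω' | ∀ k, ∑ i, a k ω' i * A k x i ≤ b k ω'}
      · rw [Set.indicator_of_mem (this.mpr hm), Set.indicator_of_mem hm]; ring
      · rw [Set.indicator_of_notMem (fun h => hm (this.mp h)),
          Set.indicator_of_notMem hm]; ring
    exact Tendsto.congr' (hev.mono fun x' e => e.symm) tendsto_const_nhds
end
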